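/- arXiv:1007.1955 — 3 statements merged into one kernel-verified Lean document; each statement's English description precedes it below -/
import Mathlib

section
/- Define c_{α,β} = Σ_{k=1}^{β} (-1)^{β-k} · [α+k, k] · C(α+β, β-k), where [n,k] is the unsigned Stirling number of the first kind. Then for α ≥ 1 and β ≥ 1, c_{α,β} = (α + β - 1) · (c_{α-1,β} + c_{α-1,β-1}). -/
/-- Unsigned Stirling numbers of the first kind. -/
def stirlingFirst : ℕ → ℕ → ℕ
  | 0, 0 => 1
  | 0, _ + 1 => 0
  | _ + 1, 0 => 0
  | n + 1, k + 1 => n * stirlingFirst n (k + 1) + stirlingFirst n k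

/-- The coefficients `c_{α,β}` from the paper. -/
def cCoeff (α β : ℕ) : ℤ :=
  ∑ k ∈ Finset.Icc 1 β,
    (-1 : ℤ) ^ (β - k) * stirlingFirst (α + k) k * (α + β).choose (β - k)

/-!
Let `G_a = ∑_{k ≥ 1} [a+k, k] X^k`. Then `c_{a,b}` is the coefficient of `X^b` in
`(1 - X)^(a+b) G_a`, and the Stirling recurrence reads `(1 - X) G_{a+1} = (a + X d/dX) G_a`.
Since `X d/dX` multiplies the `b`-th coefficient by `b`, moving it across `(1 - X)^(a+b)` by the
Leibniz rule gives `[X^b] (1 - X)^(a+b) (a + X d/dX) G_a = (a+b) [X^b] (1 - X)^(a+b-1) G_a`,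
while `c_{a,b} + c_{a,b-1} = [X^b] ((1 - X) + X) (1 - X)^(a+b-1) G_a`.
-/

open PowerSeries

namespace PowerSeries

variable {R : Type*} [CommRing R]

theorem coeff_one_sub_X_pow (n k : ℕ) :
    coeff k ((1 - X : R⟦X⟧) ^ n) = (-1) ^ k * n.choose k := by
  have h : (1 - X : R⟦X⟧) ^ n = rescale (-1) ((1 + Polynomial.X) ^ n : Polynomial R) := by
    simp [sub_eq_add_neg]
  rw [h, coeff_rescale, Polynomial.coeff_coe, Polynomial.coeff_one_add_X_pow]

theorem coeff_X_mul_derivative (f : R⟦X⟧) (n : ℕ) :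
    coeff n (X * d⁄dX R f) = n * coeff n f := by
  cases n with
  | zero => simp
  | succ n => rw [coeff_succ_X_mul, coeff_derivative, mul_comm]; push_cast; ring

theorem coeff_one_sub_X_pow_succ_mul_nsmul_add_X_mul_derivative {a b n : ℕ} (h : a + b = n + 1)
    (f : R⟦X⟧) :
    coeff b ((1 - X : R⟦X⟧) ^ (n + 1) * (a • f + X * d⁄dX R f)) =
      (n + 1) * coeff b ((1 - X : R⟦X⟧) ^ n * f) := by
  set g := (1 - X : R⟦X⟧) ^ n * f
  have hleibniz : X * d⁄dX R ((1 - X) ^ (n + 1) * f) =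
      (1 - X) ^ (n + 1) * (X * d⁄dX R f) - (n + 1) • (X * g) := by
    rw [Derivation.leibniz, derivative_pow]
    simp only [g, smul_eq_mul, nsmul_eq_mul, map_sub, derivative_one, derivative_X]
    push_cast
    ring
  have hsplit : (1 - X : R⟦X⟧) ^ (n + 1) * (a • f + X * d⁄dX R f) =
      a • (g - X * g) + X * d⁄dX R ((1 - X) ^ (n + 1) * f) + (n + 1) • (X * g) := by
    rw [hleibniz]
    simp only [g, nsmul_eq_mul]
    ring
  have hab : (a : R) + b = n + 1 := by rw [← Nat.cast_add, h, Nat.cast_succ]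
  have hg : (1 - X : R⟦X⟧) ^ (n + 1) * f = g - X * g := by simp only [g]; ring
  rw [hsplit, map_add, map_add, coeff_X_mul_derivative, hg, map_nsmul, map_nsmul, map_sub,
    nsmul_eq_mul, nsmul_eq_mul]
  push_cast
  linear_combination (coeff b g - coeff b (X * g)) * hab

end PowerSeries

-- The constant term is `0` rather than `[a, 0]`, matching the range `1 ≤ k` in `cCoeff`.
noncomputable def stirlingDiagSeries (a : ℕ) : ℤ⟦X⟧ :=
  mk fun k => if k = 0 then 0 else (stirlingFirst (a + k) k : ℤ)

theorem coeff_stirlingDiagSeries_succ (a k : ℕ) :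
    coeff k (stirlingDiagSeries (a + 1)) = stirlingFirst (a + 1 + k) k := by
  cases k <;> simp [stirlingDiagSeries, stirlingFirst]

theorem one_sub_X_mul_stirlingDiagSeries_succ (a : ℕ) :
    (1 - X) * stirlingDiagSeries (a + 1) =
      a • stirlingDiagSeries a + X * d⁄dX ℤ (stirlingDiagSeries a) := by
  ext (_ | k)
  · simp [stirlingDiagSeries]
  · have hrec : stirlingFirst (a + 1 + (k + 1)) (k + 1) =
        (a + 1 + k) * stirlingFirst (a + 1 + k) (k + 1) + stirlingFirst (a + 1 + k) k := rfl
    rw [sub_mul, one_mul, map_sub, coeff_succ_X_mul, coeff_stirlingDiagSeries_succ,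
      coeff_stirlingDiagSeries_succ, hrec, map_add, coeff_X_mul_derivative, map_nsmul,
      show a + 1 + k = a + (k + 1) by ring]
    simp [stirlingDiagSeries]
    ring

theorem cCoeff_eq_coeff (a b : ℕ) :
    cCoeff a b = coeff b ((1 - X : ℤ⟦X⟧) ^ (a + b) * stirlingDiagSeries a) := by
  rw [mul_comm, coeff_mul, Finset.Nat.sum_antidiagonal_eq_sum_range_succ
    (fun i j => coeff i (stirlingDiagSeries a) * coeff j ((1 - X : ℤ⟦X⟧) ^ (a + b)))]
  refine (Finset.sum_congr rfl fun k hk => ?_).trans (Finset.sum_subset ?_ fun k hk hk' => ?_)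
  · have hk0 : k ≠ 0 := by rw [Finset.mem_Icc] at hk; omega
    simp [stirlingDiagSeries, coeff_one_sub_X_pow, hk0]
    ring
  · intro k hk
    rw [Finset.mem_Icc] at hk
    rw [Finset.mem_range]
    omega
  · have hk0 : k = 0 := by rw [Finset.mem_range] at hk; rw [Finset.mem_Icc] at hk'; omega
    simp [stirlingDiagSeries, hk0]

theorem cCoeff_succ_add_cCoeff (a c : ℕ) :
    cCoeff a (c + 1) + cCoeff a c =
      coeff (c + 1) ((1 - X : ℤ⟦X⟧) ^ (a + c) * stirlingDiagSeries a) := by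
  rw [cCoeff_eq_coeff, cCoeff_eq_coeff, ← coeff_succ_X_mul c, ← map_add]
  ring_nf

theorem cCoeff_succ_succ (a c : ℕ) :
    cCoeff (a + 1) (c + 1) =
      (a + c + 1) * coeff (c + 1) ((1 - X : ℤ⟦X⟧) ^ (a + c) * stirlingDiagSeries a) := by
  rw [cCoeff_eq_coeff, show a + 1 + (c + 1) = a + c + 1 + 1 by ring, pow_succ, mul_assoc,
    one_sub_X_mul_stirlingDiagSeries_succ,
    coeff_one_sub_X_pow_succ_mul_nsmul_add_X_mul_derivative (show a + (c + 1) = a + c + 1 by ring)]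
  push_cast
  ring

theorem stmt_3 (α β : ℕ) (hα : 1 ≤ α) (hβ : 1 ≤ β) :
    cCoeff α β = ((α : ℤ) + β - 1) * (cCoeff (α - 1) β + cCoeff (α - 1) (β - 1)) := by
  obtain ⟨a, rfl⟩ := Nat.exists_eq_add_of_le' hα
  obtain ⟨c, rfl⟩ := Nat.exists_eq_add_of_le' hβ
  rw [Nat.add_sub_cancel, Nat.add_sub_cancel, cCoeff_succ_succ, cCoeff_succ_add_cCoeff]
  push_cast
  ring
end

section
/- For complex s with Re(s) > 0 and nonnegative integer n, ∫_0^∞ t^{s-1}/(1+e^t) dt = ((-1)^{n+1}/(s(s+1)···(s+n))) · ∫_0^∞ t^{s+n} · (d/dt)^{n+1}[1/(1+e^t)] dt. -/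
/-!
Write `f(t) = 1 / (1 + eᵗ)`. Since `f' = f (f - 1)`, every derivative of `f` is `f · Q(f)` for a
polynomial `Q`; as `‖f(t)‖ ≤ min(1, e⁻ᵗ)`, all derivatives of `f` are `O(e⁻ᵗ)` on `ℝ`. Hence for
`Re c > 0` the boundary terms of `∫₀^∞ tᶜ f⁽ᵏ⁺¹⁾ = -c ∫₀^∞ tᶜ⁻¹ f⁽ᵏ⁾` vanish at both ends, and
applying this with `c = s + n, s + n - 1, …, s` gives the formula.
-/

open MeasureTheory Set Filter Topology Polynomial
open scoped ContDiff

section ExpDecay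

variable {g g' : ℝ → ℂ} {B B' : ℝ} {c : ℂ}

theorem norm_ofReal_cpow_mul_le_of_norm_le_exp (hg : ∀ t, ‖g t‖ ≤ B * Real.exp (-t)) {t : ℝ}
    (ht : 0 < t) : ‖(t : ℂ) ^ c * g t‖ ≤ t ^ c.re * (B * Real.exp (-t)) := by
  rw [norm_mul, Complex.norm_cpow_eq_rpow_re_of_pos ht]
  exact mul_le_mul_of_nonneg_left (hg t) (Real.rpow_nonneg ht.le _)

theorem integrableOn_ofReal_cpow_mul_of_norm_le_exp (hc : 0 < c.re) (hg_cont : Continuous g)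
    (hg : ∀ t, ‖g t‖ ≤ B * Real.exp (-t)) :
    IntegrableOn (fun t : ℝ => (t : ℂ) ^ (c - 1) * g t) (Ioi 0) := by
  have hcont : ContinuousOn (fun t : ℝ => (t : ℂ) ^ (c - 1) * g t) (Ioi 0) := fun t ht =>
    ((Complex.continuousAt_ofReal_cpow_const t _ (Or.inr (ne_of_gt ht))).mul
      hg_cont.continuousAt).continuousWithinAt
  refine ((Real.GammaIntegral_convergent hc).const_mul B).mono'
    (hcont.aestronglyMeasurable measurableSet_Ioi) ?_
  filter_upwards [ae_restrict_mem measurableSet_Ioi] with t ht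
  calc _ ≤ t ^ (c - 1).re * (B * Real.exp (-t)) := norm_ofReal_cpow_mul_le_of_norm_le_exp hg ht
    _ = B * (Real.exp (-t) * t ^ (c.re - 1)) := by rw [Complex.sub_re, Complex.one_re]; ring

theorem tendsto_ofReal_cpow_mul_atTop_of_norm_le_exp (hg : ∀ t, ‖g t‖ ≤ B * Real.exp (-t)) :
    Tendsto (fun t : ℝ => (t : ℂ) ^ c * g t) atTop (𝓝 0) := by
  have hbound : Tendsto (fun t : ℝ => t ^ c.re * (B * Real.exp (-t))) atTop (𝓝 0) := by
    simpa [mul_left_comm] using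
      (tendsto_rpow_mul_exp_neg_mul_atTop_nhds_zero c.re 1 one_pos).const_mul B
  exact squeeze_zero_norm' ((eventually_gt_atTop 0).mono fun t ht =>
    norm_ofReal_cpow_mul_le_of_norm_le_exp hg ht) hbound

theorem tendsto_ofReal_cpow_mul_nhdsGT_zero_of_norm_le_exp (hc : 0 < c.re)
    (hg : ∀ t, ‖g t‖ ≤ B * Real.exp (-t)) :
    Tendsto (fun t : ℝ => (t : ℂ) ^ c * g t) (𝓝[>] 0) (𝓝 0) := by
  have hbound : Tendsto (fun t : ℝ => t ^ c.re * (B * Real.exp (-t))) (𝓝[>] 0) (𝓝 0) := by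
    have : ContinuousAt (fun t : ℝ => t ^ c.re * (B * Real.exp (-t))) 0 :=
      (Real.continuousAt_rpow_const 0 c.re (Or.inr hc.le)).mul (by fun_prop)
    simpa [Real.zero_rpow hc.ne'] using this.tendsto.mono_left nhdsWithin_le_nhds
  exact squeeze_zero_norm' (eventually_mem_nhdsWithin.mono fun t ht =>
    norm_ofReal_cpow_mul_le_of_norm_le_exp hg ht) hbound

theorem integral_ofReal_cpow_mul_deriv_Ioi (hc : 0 < c.re) (hderiv : ∀ t, HasDerivAt g (g' t) t)
    (hg'_cont : Continuous g') (hg : ∀ t, ‖g t‖ ≤ B * Real.exp (-t))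
    (hg' : ∀ t, ‖g' t‖ ≤ B' * Real.exp (-t)) :
    ∫ t in Ioi (0 : ℝ), (t : ℂ) ^ c * g' t = -c * ∫ t in Ioi (0 : ℝ), (t : ℂ) ^ (c - 1) * g t := by
  have hc0 : c ≠ 0 := fun h => by simp [h] at hc
  have hc1 : 0 < (c + 1).re := by rw [Complex.add_re, Complex.one_re]; linarith
  have hpow : ∀ t ∈ Ioi (0 : ℝ), HasDerivAt (fun t : ℝ => (t : ℂ) ^ c) (c * (t : ℂ) ^ (c - 1)) t :=
    fun t ht => hasDerivAt_ofReal_cpow_const (ne_of_gt ht) hc0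
  have hint : IntegrableOn (fun t : ℝ => c * (t : ℂ) ^ (c - 1) * g t) (Ioi 0) := by
    simp_rw [mul_assoc]
    exact (integrableOn_ofReal_cpow_mul_of_norm_le_exp hc
      (continuous_iff_continuousAt.2 fun t => (hderiv t).continuousAt) hg).const_mul c
  have hint' : IntegrableOn (fun t : ℝ => (t : ℂ) ^ c * g' t) (Ioi 0) := by
    simpa using integrableOn_ofReal_cpow_mul_of_norm_le_exp hc1 hg'_cont hg'
  rw [integral_Ioi_mul_deriv_eq_deriv_mul hpow (fun t _ => hderiv t) hint' hint
    (tendsto_ofReal_cpow_mul_nhdsGT_zero_of_norm_le_exp hc hg)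
    (tendsto_ofReal_cpow_mul_atTop_of_norm_le_exp hg)]
  simp only [mul_assoc, integral_const_mul]
  ring

theorem integral_ofReal_cpow_mul_iteratedDeriv_Ioi {f : ℝ → ℂ} (hf : ContDiff ℝ ∞ f)
    (hdecay : ∀ k : ℕ, ∃ B, ∀ t, ‖iteratedDeriv k f t‖ ≤ B * Real.exp (-t))
    {s : ℂ} (hs : 0 < s.re) (n : ℕ) :
    ∫ t in Ioi (0 : ℝ), (t : ℂ) ^ (s + n) * iteratedDeriv (n + 1) f t =
      (-1) ^ (n + 1) * (∏ j ∈ Finset.range (n + 1), (s + j)) *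
        ∫ t in Ioi (0 : ℝ), (t : ℂ) ^ (s - 1) * f t := by
  have hstep : ∀ k : ℕ, ∫ t in Ioi (0 : ℝ), (t : ℂ) ^ (s + k) * iteratedDeriv (k + 1) f t =
      -(s + k) * ∫ t in Ioi (0 : ℝ), (t : ℂ) ^ (s + k - 1) * iteratedDeriv k f t := by
    intro k
    obtain ⟨B, hB⟩ := hdecay k
    obtain ⟨B', hB'⟩ := hdecay (k + 1)
    have hsk : 0 < (s + k).re := by rw [Complex.add_re, Complex.natCast_re]; positivity
    refine integral_ofReal_cpow_mul_deriv_Ioi hsk (fun t => ?_)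
      (hf.continuous_iteratedDeriv _ (WithTop.coe_le_coe.2 le_top)) hB hB'
    rw [iteratedDeriv_succ]
    exact (hf.differentiable_iteratedDeriv k
      (WithTop.coe_lt_coe.2 (ENat.natCast_lt_top k)) t).hasDerivAt
  induction n with
  | zero => simpa using hstep 0
  | succ n ih =>
    rw [hstep, show s + ((n + 1 : ℕ) : ℂ) - 1 = s + n by push_cast; ring, ih,
      Finset.prod_range_succ _ (n + 1)]
    push_cast
    ring

end ExpDecay

section FermiDirac

noncomputable def fermiDirac (u : ℝ) : ℂ := 1 / (1 + (Real.exp u : ℂ))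

theorem one_add_ofReal_exp_ne_zero (u : ℝ) : (1 : ℂ) + Real.exp u ≠ 0 := by
  exact_mod_cast (by positivity : 1 + Real.exp u ≠ 0)

theorem fermiDirac_eq_ofReal (u : ℝ) : fermiDirac u = ((1 + Real.exp u)⁻¹ : ℝ) := by
  simp [fermiDirac]

theorem norm_fermiDirac_le_one (u : ℝ) : ‖fermiDirac u‖ ≤ 1 := by
  rw [fermiDirac_eq_ofReal, Complex.norm_real, Real.norm_of_nonneg (by positivity)]
  exact inv_le_one_of_one_le₀ (by linarith [Real.exp_pos u])

theorem norm_fermiDirac_le_exp_neg (u : ℝ) : ‖fermiDirac u‖ ≤ Real.exp (-u) := by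
  rw [fermiDirac_eq_ofReal, Complex.norm_real, Real.norm_of_nonneg (by positivity), Real.exp_neg]
  exact inv_anti₀ (Real.exp_pos u) (by linarith)

theorem hasDerivAt_fermiDirac (u : ℝ) :
    HasDerivAt fermiDirac (fermiDirac u * (fermiDirac u - 1)) u := by
  have hne := one_add_ofReal_exp_ne_zero u
  refine ((hasDerivAt_const u (1 : ℂ)).div
    ((Real.hasDerivAt_exp u).ofReal_comp.const_add 1) hne).congr_deriv ?_
  unfold fermiDirac
  field_simp
  ring

theorem contDiff_fermiDirac : ContDiff ℝ ∞ fermiDirac := by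
  rw [show fermiDirac = fun u : ℝ => (1 + (Real.exp u : ℂ))⁻¹ from funext fun u => one_div _]
  exact (contDiff_const.add (Complex.ofRealCLM.contDiff.comp Real.contDiff_exp)).inv
    one_add_ofReal_exp_ne_zero

theorem exists_iteratedDeriv_eq_mul_eval {g : ℝ → ℂ} {P : ℂ[X]}
    (hg : ∀ t, HasDerivAt g (g t * P.eval (g t)) t) (k : ℕ) :
    ∃ Q : ℂ[X], ∀ t, iteratedDeriv k g t = g t * Q.eval (g t) := by
  induction k with
  | zero => exact ⟨1, fun t => by simp⟩
  | succ k ih =>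
    obtain ⟨Q, hQ⟩ := ih
    refine ⟨P * (Q + X * derivative Q), fun t => ?_⟩
    have hderiv : HasDerivAt (fun x => g x * Q.eval (g x))
        (g t * P.eval (g t) * Q.eval (g t) + g t * (Q.derivative.eval (g t) * (g t * P.eval (g t))))
        t :=
      (hg t).mul ((Q.hasDerivAt (g t)).comp t (hg t))
    rw [iteratedDeriv_succ, funext hQ, hderiv.deriv]
    simp only [eval_mul, eval_add, eval_X]
    ring

theorem exists_norm_iteratedDeriv_fermiDirac_le (k : ℕ) :
    ∃ B, ∀ t, ‖iteratedDeriv k fermiDirac t‖ ≤ B * Real.exp (-t) := by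
  obtain ⟨Q, hQ⟩ := exists_iteratedDeriv_eq_mul_eval (P := X - 1)
    (fun t => by simpa using hasDerivAt_fermiDirac t) k
  obtain ⟨B, hB⟩ := (isCompact_closedBall (0 : ℂ) 1).exists_bound_of_continuousOn
    Q.continuous.continuousOn
  refine ⟨B, fun t => ?_⟩
  rw [hQ, norm_mul, mul_comm B]
  exact mul_le_mul (norm_fermiDirac_le_exp_neg t)
    (hB _ (mem_closedBall_zero_iff.2 (norm_fermiDirac_le_one t))) (norm_nonneg _)
    (Real.exp_pos _).le

end FermiDirac

theorem stmt_15 (s : ℂ) (hs : 0 < s.re) (n : ℕ) :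
    ∫ t in Set.Ioi (0 : ℝ), (t : ℂ) ^ (s - 1) / (1 + Real.exp t) =
      ((-1 : ℂ) ^ (n + 1) / ∏ j ∈ Finset.range (n + 1), (s + j)) *
        ∫ t in Set.Ioi (0 : ℝ),
          (t : ℂ) ^ (s + n) *
            iteratedDeriv (n + 1) (fun u : ℝ => 1 / (1 + (Real.exp u : ℂ))) t := by
  have hprod : ∏ j ∈ Finset.range (n + 1), (s + j) ≠ 0 :=
    Finset.prod_ne_zero_iff.2 fun j _ => ne_of_apply_ne Complex.re <| by
      rw [Complex.add_re, Complex.natCast_re, Complex.zero_re]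
      positivity
  have hsign : ((-1 : ℂ) ^ (n + 1)) ^ 2 = 1 := by rw [← pow_mul, pow_mul', neg_one_sq, one_pow]
  rw [show (fun u : ℝ => 1 / (1 + (Real.exp u : ℂ))) = fermiDirac from rfl,
    integral_ofReal_cpow_mul_iteratedDeriv_Ioi contDiff_fermiDirac
      exists_norm_iteratedDeriv_fermiDirac_le hs n]
  simp only [fermiDirac, ← div_eq_mul_one_div]
  field_simp
  rw [hsign, mul_one]
end

section
/- Define b_{α,β} = Σ_{j=0}^{β} (-1)^j · C(α+β, j) · a_{α+β-j, β-j} / 2^{β-j}, where a_{n,k} are the coefficients of the Mittag-Leffler polynomials. Then for α ≥ 4 and β ≥ 1, b_{α,β} = (α+β-2)(α+β-1)·(b_{α-2,β} + b_{α-2,β-1}). -/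
/-- Coefficients `a_{n,k}` of the Mittag-Leffler polynomials:
`a_{0,0} = 1`, `a_{1,1} = 2`, `a_{n,k} = 0` for `k > n`, and
`a_{n,k} = (n-1)(n-2) a_{n-2,k} + 2 a_{n-1,k-1}` for `n ≥ 2`. -/
def mlCoeff : ℕ → ℕ → ℤ
  | 0, 0 => 1
  | 0, _ + 1 => 0
  | 1, 0 => 0
  | 1, 1 => 2
  | 1, _ + 2 => 0
  | n + 2, 0 => (n + 1) * n * mlCoeff n 0
  | n + 2, k + 1 => (n + 1) * n * mlCoeff n (k + 1) + 2 * mlCoeff (n + 1) k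

/-- The coefficients `b_{α,β}` from the paper. -/
def bCoeff (α β : ℕ) : ℚ :=
  ∑ j ∈ Finset.range (β + 1),
    (-1 : ℚ) ^ j * (α + β).choose j * (mlCoeff (α + β - j) (β - j) : ℚ) / 2 ^ (β - j)

/-
Rescale the coefficients to `c(n,k) = k! a_{n,k} / (n! 2^k)`; the defining recurrence becomes
`(m+2) c(m+2,k) = m c(m,k) + k c(m+1,k-1)`. Along the diagonals `f_α(i) = c(α+i,i)` one has
`b_{α,β} = (α+β)!/β! · Δ^β f_α(0)`, since `b` is an alternating binomial sum. Apply `Δ^β` to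
the recurrence read along the diagonals; the Leibniz rule
`Δ^{n+1}(i u) = i Δ^{n+1} u + (n+1) Δ^n u(i+1)` yields
`(α+β+2) Δ^β f_{α+2}(0) = (α+β) Δ^β f_α(0) + β Δ^{β-1} f_α(0)`,
which is the claimed recurrence once the factorials are cleared.
-/

open Nat fwdDiff Function

section FwdDiff

variable {R : Type*} [Ring R]

theorem fwdDiff_iter_natCast_mul (u : ℕ → R) (n y : ℕ) :
    (Δ_[1])^[n + 1] (fun i : ℕ ↦ (i : R) * u i) y
      = y * (Δ_[1])^[n + 1] u y + (n + 1) * (Δ_[1])^[n] u (y + 1) := by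
  induction n generalizing u y with
  | zero =>
    simp only [zero_add, iterate_one, iterate_zero, id_eq, fwdDiff, Nat.cast_add, Nat.cast_one,
      Nat.cast_zero]
    noncomm_ring
  | succ n ih =>
    have hΔ : Δ_[1] (fun i : ℕ ↦ (i : R) * u i)
        = (fun i : ℕ ↦ (i : R) * Δ_[1] u i) + fun i : ℕ ↦ u (i + 1) := by
      ext i; simp only [fwdDiff, Pi.add_apply, Nat.cast_add, Nat.cast_one]; noncomm_ring
    rw [iterate_succ_apply, hΔ, fwdDiff_iter_add, Pi.add_apply, ih, fwdDiff_iter_comp_add]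
    simp only [iterate_succ_apply, Nat.cast_add, Nat.cast_one]
    noncomm_ring

theorem fwdDiff_iter_apply_one {G : Type*} [AddCommGroup G] (u : ℕ → G) (n : ℕ) :
    (Δ_[1])^[n] u 1 = (Δ_[1])^[n + 1] u 0 + (Δ_[1])^[n] u 0 := by
  rw [iterate_succ_apply', fwdDiff, zero_add, sub_add_cancel]

end FwdDiff

def mlCoeffScaled (n k : ℕ) : ℚ := k ! * mlCoeff n k / (n ! * 2 ^ k)

theorem mlCoeffScaled_recurrence (m k : ℕ) :
    (m + 2) * mlCoeffScaled (m + 2) k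
      = m * mlCoeffScaled m k + k * mlCoeffScaled (m + 1) (k - 1) := by
  have := factorial_ne_zero m
  cases k <;>
  · simp only [mlCoeffScaled, mlCoeff, factorial_succ, add_tsub_cancel_right, pow_succ]
    field_simp
    push_cast
    ring

def mlDiag (α i : ℕ) : ℚ := mlCoeffScaled (α + i) i

theorem mlDiag_recurrence (α i : ℕ) :
    (α + 2 + i) * mlDiag (α + 2) i = (α + i) * mlDiag α i + i * mlDiag (α + 2) (i - 1) := by
  rcases i with _ | i
  · simpa [mlDiag] using mlCoeffScaled_recurrence α 0
  · have := mlCoeffScaled_recurrence (α + (i + 1)) (i + 1)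
    simp only [mlDiag, add_tsub_cancel_right]
    rw [show α + 2 + i = α + (i + 1) + 1 by omega,
      show α + 2 + (i + 1) = α + (i + 1) + 2 by omega]
    push_cast at this ⊢
    linear_combination this

theorem fwdDiff_iter_mlDiag (α n : ℕ) :
    (α + n + 3) * (Δ_[1])^[n + 1] (mlDiag (α + 2)) 0
      = (α + n + 1) * (Δ_[1])^[n + 1] (mlDiag α) 0 + (n + 1) * (Δ_[1])^[n] (mlDiag α) 0 := by
  have hfun : ((α : ℚ) + 2) • mlDiag (α + 2) + (fun i : ℕ ↦ (i : ℚ) * mlDiag (α + 2) i)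
      = ((α : ℚ) • mlDiag α + fun i : ℕ ↦ (i : ℚ) * mlDiag α i)
        + fun i : ℕ ↦ (i : ℚ) * mlDiag (α + 2) (i - 1) := by
    ext i
    simp only [Pi.add_apply, Pi.smul_apply, smul_eq_mul]
    linear_combination mlDiag_recurrence α i
  have hshift :
      (Δ_[1])^[n] (fun i ↦ mlDiag (α + 2) (i - 1)) 1 = (Δ_[1])^[n] (mlDiag (α + 2)) 0 := by
    simpa using (fwdDiff_iter_comp_add 1 (fun i ↦ mlDiag (α + 2) (i - 1)) 1 n 0).symm
  have := congrFun (congrArg (Δ_[1])^[n + 1] hfun) 0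
  simp only [fwdDiff_iter_add, fwdDiff_iter_const_smul, Pi.add_apply, Pi.smul_apply, smul_eq_mul,
    fwdDiff_iter_natCast_mul, Nat.cast_zero, zero_mul, zero_add, hshift,
    fwdDiff_iter_apply_one] at this
  linear_combination this

theorem bCoeff_eq_fwdDiff_iter (α β : ℕ) :
    bCoeff α β = (α + β) ! / β ! * (Δ_[1])^[β] (mlDiag α) 0 := by
  rw [fwdDiff_iter_eq_sum_shift, Finset.mul_sum, ← Finset.sum_range_reflect]
  refine Finset.sum_congr rfl fun j hj ↦ ?_
  have hjβ : j ≤ β := Nat.lt_succ_iff.mp (Finset.mem_range.mp hj)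
  rw [add_tsub_cancel_right, Nat.sub_sub_self hjβ, Nat.choose_symm hjβ, zsmul_eq_mul, mlDiag,
    mlCoeffScaled, smul_eq_mul, mul_one, zero_add, ← Nat.add_sub_assoc hjβ, Int.cast_mul,
    Int.cast_natCast, Nat.cast_choose ℚ hjβ, Nat.cast_choose ℚ (by omega : j ≤ α + β)]
  have := factorial_ne_zero β
  have := factorial_ne_zero (β - j)
  have := factorial_ne_zero (α + β - j)
  have := factorial_ne_zero j
  field_simp
  push_cast
  ring

theorem bCoeff_add_two (a n : ℕ) :
    bCoeff (a + 2) (n + 1) = (a + n + 1) * (a + n + 2) * (bCoeff a (n + 1) + bCoeff a n) := by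
  rw [bCoeff_eq_fwdDiff_iter, bCoeff_eq_fwdDiff_iter, bCoeff_eq_fwdDiff_iter,
    show a + 2 + (n + 1) = a + n + 3 by omega, show a + (n + 1) = a + n + 1 by omega]
  simp only [factorial_succ, Nat.cast_mul]
  have := factorial_ne_zero n
  have := factorial_ne_zero (a + n)
  field_simp
  push_cast
  linear_combination ((a : ℚ) + n + 2) * (a + n + 1) * fwdDiff_iter_mlDiag a n

theorem stmt_18 (α β : ℕ) (hα : 4 ≤ α) (hβ : 1 ≤ β) :
    bCoeff α β = ((α : ℚ) + β - 2) * ((α : ℚ) + β - 1) *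
      (bCoeff (α - 2) β + bCoeff (α - 2) (β - 1)) := by
  obtain ⟨a, rfl⟩ : ∃ a, α = a + 2 := ⟨α - 2, by omega⟩
  obtain ⟨n, rfl⟩ : ∃ n, β = n + 1 := ⟨β - 1, by omega⟩
  rw [bCoeff_add_two, add_tsub_cancel_right, add_tsub_cancel_right]
  push_cast
  ring
end
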